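/- For an integer k ≥ 2, if a maximal repetition r'' is left associated with a maximal repetition r' in a word w, then end(r') < end(r'') ≤ end(r') + 2k·|r'|. -/
import Mathlib


open scoped Classical

namespace Gapped

variable {α : Type*}

/-- `p` is a period of the factor `w[i..j]` of the word `w` (positions are 1-indexed). -/
def IsPeriod (w : ℕ → α) (i j p : ℕ) : Prop :=
  0 < p ∧ ∀ t, i ≤ t → t + p ≤ j → w t = w (t + p)

/-- The minimal period `p(w[i..j])` of the factor `w[i..j]`. -/
noncomputable def minPer (w : ℕ → α) (i j : ℕ) : ℕ :=
  sInf {p | IsPeriod w i j p}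

/-- The length of the factor `w[i..j]`. -/
def flen (i j : ℕ) : ℕ := j - i + 1

/-- The exponent `e(w[i..j]) = |w[i..j]| / p(w[i..j])` of the factor `w[i..j]`. -/
noncomputable def expo (w : ℕ → α) (i j : ℕ) : ℝ :=
  (flen i j : ℝ) / (minPer w i j : ℝ)

/-- `w[i..j]` is a valid factor of a word of length `n`. -/
def IsFactor (n i j : ℕ) : Prop := 1 ≤ i ∧ i ≤ j ∧ j ≤ n

/-- `w[i..j]` is a repetition: a factor of exponent at least 2. -/
def IsRep (w : ℕ → α) (n i j : ℕ) : Prop :=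
  IsFactor n i j ∧ 2 * minPer w i j ≤ flen i j

/-- `w[i..j]` is a maximal repetition in the word `w` of length `n`. -/
def MaxRep (w : ℕ → α) (n i j : ℕ) : Prop :=
  IsRep w n i j ∧
  (1 < i → w (i - 1) ≠ w (i - 1 + minPer w i j)) ∧
  (j < n → w (j + 1 - minPer w i j) ≠ w (j + 1))

/-- `w[i..j]` is a δ-subrepetition: `1 + δ ≤ e(w[i..j]) < 2`. -/
def IsSubrep (w : ℕ → α) (n : ℕ) (δ : ℝ) (i j : ℕ) : Prop :=
  IsFactor n i j ∧ 1 + δ ≤ expo w i j ∧ expo w i j < 2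

/-- `w[i..j]` is a maximal δ-subrepetition in the word `w` of length `n`. -/
def MaxSubrep (w : ℕ → α) (n : ℕ) (δ : ℝ) (i j : ℕ) : Prop :=
  IsSubrep w n δ i j ∧
  (1 < i → w (i - 1) ≠ w (i - 1 + minPer w i j)) ∧
  (j < n → w (j + 1 - minPer w i j) ≠ w (j + 1))

/-- `w[i..j]` is a maximal subrepetition (a maximal δ-subrepetition for some 0 < δ < 1). -/
def MaxSubrepAny (w : ℕ → α) (n i j : ℕ) : Prop :=
  ∃ δ : ℝ, 0 < δ ∧ δ < 1 ∧ MaxSubrep w n δ i j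

/-- Gapped repeat `(i1, j1, p)`: left copy `w[i1..j1]`, period `p`, right copy
`w[i1+p..j1+p]`; both copies are equal and the gap `w[j1+1..i1+p-1]` is nonempty
(`c(σ) = flen i1 j1 < p`). -/
def IsGapped (w : ℕ → α) (n i1 j1 p : ℕ) : Prop :=
  1 ≤ i1 ∧ i1 ≤ j1 ∧ flen i1 j1 < p ∧ j1 + p ≤ n ∧
  ∀ t, i1 ≤ t → t ≤ j1 → w t = w (t + p)

/-- Maximal gapped repeat: the copies cannot be extended to the left or right
with preserving the period. -/
def MaxGapped (w : ℕ → α) (n i1 j1 p : ℕ) : Prop :=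
  IsGapped w n i1 j1 p ∧
  (1 < i1 → w (i1 - 1) ≠ w (i1 - 1 + p)) ∧
  (j1 + p < n → w (j1 + 1) ≠ w (j1 + 1 + p))

/-- The gapped repeat `(i1, j1, p)` is `a`-gapped: `p(σ) ≤ a · c(σ)`. -/
def AlphaGapped (a : ℝ) (i1 j1 p : ℕ) : Prop :=
  (p : ℝ) ≤ a * (flen i1 j1 : ℝ)

/-- Maximal `a`-gapped repeat. -/
def MaxAlphaGapped (w : ℕ → α) (n : ℕ) (a : ℝ) (i1 j1 p : ℕ) : Prop :=
  MaxGapped w n i1 j1 p ∧ AlphaGapped a i1 j1 p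

/-- `w[I..J]` is the extension of the repetition `w[i..j]`: the maximal repetition
containing it with the same minimal period. -/
def IsExtension (w : ℕ → α) (n i j I J : ℕ) : Prop :=
  MaxRep w n I J ∧ I ≤ i ∧ j ≤ J ∧ minPer w I J = minPer w i j

/-- The gapped repeat `(i1, j1, p)` is periodic: both copies are repetitions. -/
def PeriodicGapped (w : ℕ → α) (n i1 j1 p : ℕ) : Prop :=
  IsRep w n i1 j1 ∧ IsRep w n (i1 + p) (j1 + p)

/-- The maximal gapped repeat `(i1, j1, p)` is a private repeat generated by the
maximal repetition `w[I..J]`: it is periodic and `w[I..J]` is the common extension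
of both copies. -/
def PrivateGenBy (w : ℕ → α) (n i1 j1 p I J : ℕ) : Prop :=
  MaxGapped w n i1 j1 p ∧ PeriodicGapped w n i1 j1 p ∧
  IsExtension w n i1 j1 I J ∧ IsExtension w n (i1 + p) (j1 + p) I J

/-- The maximal gapped repeat `(i1, j1, p)` is private. -/
def IsPrivate (w : ℕ → α) (n i1 j1 p : ℕ) : Prop :=
  ∃ I J, PrivateGenBy w n i1 j1 p I J

/-- `m` is a periodic-prefix length for the copy `w[i..j]`: the prefix of length `m`
is a repetition whose length is at least half of the copy length. -/
def PerPrefix (w : ℕ → α) (n i j m : ℕ) : Prop :=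
  1 ≤ m ∧ m ≤ flen i j ∧ IsRep w n i (i + m - 1) ∧ flen i j ≤ 2 * m

/-- `m` is a periodic-suffix length for the copy `w[i..j]`. -/
def PerSuffix (w : ℕ → α) (n i j m : ℕ) : Prop :=
  1 ≤ m ∧ m ≤ flen i j ∧ IsRep w n (j + 1 - m) j ∧ flen i j ≤ 2 * m

/-- `m` is the length of the periodic prefix (the longest prefix which is a repetition
of length at least half the copy length) of the copy `w[i..j]`. -/
def LongestPerPrefix (w : ℕ → α) (n i j m : ℕ) : Prop :=
  PerPrefix w n i j m ∧ ∀ m', PerPrefix w n i j m' → m' ≤ m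

/-- The gapped repeat `(i1, j1, p)` is prefix semiperiodic. -/
def PrefixSemi (w : ℕ → α) (n i1 j1 p : ℕ) : Prop :=
  ¬ IsRep w n i1 j1 ∧ ¬ IsRep w n (i1 + p) (j1 + p) ∧
  (∃ m, PerPrefix w n i1 j1 m) ∧ (∃ m, PerPrefix w n (i1 + p) (j1 + p) m)

/-- The gapped repeat `(i1, j1, p)` is suffix semiperiodic. -/
def SuffixSemi (w : ℕ → α) (n i1 j1 p : ℕ) : Prop :=
  ¬ IsRep w n i1 j1 ∧ ¬ IsRep w n (i1 + p) (j1 + p) ∧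
  (∃ m, PerSuffix w n i1 j1 m) ∧ (∃ m, PerSuffix w n (i1 + p) (j1 + p) m)

/-- The gapped repeat `(i1, j1, p)` is ordinary: neither periodic nor semiperiodic. -/
def Ordinary (w : ℕ → α) (n i1 j1 p : ℕ) : Prop :=
  ¬ PeriodicGapped w n i1 j1 p ∧ ¬ PrefixSemi w n i1 j1 p ∧ ¬ SuffixSemi w n i1 j1 p

/-- `(i1, j1, p)` belongs to `PSP_k`: it is a prefix semiperiodic maximal `k`-gapped repeat. -/
def InPSP (w : ℕ → α) (n k i1 j1 p : ℕ) : Prop :=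
  MaxGapped w n i1 j1 p ∧ AlphaGapped (k : ℝ) i1 j1 p ∧ PrefixSemi w n i1 j1 p

/-- The repeat `(i1, j1, p) ∈ PSP_k` is generated from the left by `w[I1..J1]` per
`w[I2..J2]`: these are the extensions of the periodic prefixes of the left and right
copies respectively, and `|w[I1..J1]| ≤ |w[I2..J2]|`. -/
def GenFromLeft (w : ℕ → α) (n k i1 j1 p I1 J1 I2 J2 : ℕ) : Prop :=
  InPSP w n k i1 j1 p ∧
  ∃ m, LongestPerPrefix w n i1 j1 m ∧ LongestPerPrefix w n (i1 + p) (j1 + p) m ∧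
    IsExtension w n i1 (i1 + m - 1) I1 J1 ∧
    IsExtension w n (i1 + p) (i1 + p + m - 1) I2 J2 ∧
    flen I1 J1 ≤ flen I2 J2

/-- The maximal repetition `w[I2..J2]` is left associated with the maximal repetition
`w[I1..J1]`: some repeat from `PSP_k` is generated from the left by `w[I1..J1]` per
`w[I2..J2]`. -/
def LeftAssociated (w : ℕ → α) (n k I1 J1 I2 J2 : ℕ) : Prop :=
  ∃ i1 j1 p, GenFromLeft w n k i1 j1 p I1 J1 I2 J2

/-- The periodic maximal `k`-gapped repeat `(i1, j1, p)` is non-private and is generated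
from the left by the maximal repetition `w[I..J]`: `w[I..J]` is the extension of the
left copy, the extension of the right copy is a different maximal repetition which is
not shorter. -/
def GenFromLeftPeriodic (w : ℕ → α) (n k i1 j1 p I J : ℕ) : Prop :=
  MaxGapped w n i1 j1 p ∧ AlphaGapped (k : ℝ) i1 j1 p ∧ PeriodicGapped w n i1 j1 p ∧
  IsExtension w n i1 j1 I J ∧
  ∃ I' J', IsExtension w n (i1 + p) (j1 + p) I' J' ∧ (I', J') ≠ (I, J) ∧
    flen I J ≤ flen I' J'

/-- `(i1, j1, p)` belongs to `OP_k`: it is an ordinary maximal `k`-gapped repeat. -/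
def InOP (w : ℕ → α) (n k i1 j1 p : ℕ) : Prop :=
  MaxGapped w n i1 j1 p ∧ AlphaGapped (k : ℝ) i1 j1 p ∧ Ordinary w n i1 j1 p

/-- The point `(j', p')` covers the point `(j'', p'')`. -/
def Covers (k : ℕ) (j' p' j'' p'' : ℕ) : Prop :=
  (p' : ℝ) - (p' : ℝ) / (4 * k) ≤ (p'' : ℝ) ∧ (p'' : ℝ) ≤ (p' : ℝ) ∧
  (j' : ℝ) - (p' : ℝ) / (3 * k) ≤ (j'' : ℝ) ∧ (j'' : ℝ) ≤ (j' : ℝ)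

/-- The maximal gapped repeat `(i1, j1, p)` is principal: it is the respective repeat
of some maximal subrepetition (which then spans `w[i1..j1+p]` and has minimal period `p`). -/
def Principal (w : ℕ → α) (n i1 j1 p : ℕ) : Prop :=
  ∃ δ : ℝ, 0 < δ ∧ δ < 1 ∧ MaxSubrep w n δ i1 (j1 + p) ∧ minPer w i1 (j1 + p) = p

/-- The gapped repeat `(i1, j1, p)` is stretched by the maximal repetition `w[I..J]`. -/
def StretchedByRep (w : ℕ → α) (n i1 j1 p I J : ℕ) : Prop :=
  MaxRep w n I J ∧ I ≤ i1 ∧ j1 + p ≤ J ∧ minPer w I J < p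

/-- The gapped repeat `(i1, j1, p)` is stretched by the maximal subrepetition `w[I..J]`. -/
def StretchedBySub (w : ℕ → α) (n i1 j1 p I J : ℕ) : Prop :=
  MaxSubrepAny w n I J ∧ I ≤ i1 ∧ j1 + p ≤ J ∧ minPer w I J < p

/-- The gapped repeat `(i1, j1, p)` is stretchable. -/
def Stretchable (w : ℕ → α) (n i1 j1 p : ℕ) : Prop :=
  ∃ I J, StretchedByRep w n i1 j1 p I J ∨ StretchedBySub w n i1 j1 p I J

/-- `u` (with letters at positions `1..m`) is a primitive word of length `m`:
its exponent is not an integer greater than 1. -/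
def Primitive (u : ℕ → α) (m : ℕ) : Prop :=
  ¬ (minPer u 1 m ∣ m ∧ minPer u 1 m < m)

/-- There is an occurrence of the square `uu` (where `|u| = m`) at position `i` in the
word `w` of length `n`. -/
def OccSquare (w : ℕ → α) (n : ℕ) (u : ℕ → α) (m i : ℕ) : Prop :=
  1 ≤ i ∧ i + 2 * m - 1 ≤ n ∧
  ∀ t, 1 ≤ t → t ≤ m → w (i + t - 1) = u t ∧ w (i + m + t - 1) = u t

/-- `E(w)`: the sum of exponents of all maximal repetitions in the word `w` of length `n`. -/
noncomputable def Ew (w : ℕ → α) (n : ℕ) : ℝ :=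
  ∑ r ∈ (Finset.Icc 1 n ×ˢ Finset.Icc 1 n).filter (fun r => MaxRep w n r.1 r.2),
    expo w r.1 r.2

private lemma isPeriod_mono {w : ℕ → α} {I J i j p : ℕ} (h : IsPeriod w I J p)
    (hI : I ≤ i) (hJ : j ≤ J) : IsPeriod w i j p :=
  ⟨h.1, fun t ht htp => h.2 t (le_trans hI ht) (le_trans htp hJ)⟩

private lemma minPer_isPeriod (w : ℕ → α) {i j : ℕ} (hij : i ≤ j) :
    IsPeriod w i j (minPer w i j) := by
  have hne : {p | IsPeriod w i j p}.Nonempty := by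
    refine ⟨j - i + 1, ?_, ?_⟩
    · omega
    · intro t ht htp
      exact absurd htp (by omega)
  exact Nat.sInf_mem hne

private lemma minPer_le {w : ℕ → α} {i j p : ℕ} (h : IsPeriod w i j p) :
    minPer w i j ≤ p :=
  Nat.sInf_le h

/-- If a copy `w[i..j]` is not a repetition, `m` is its longest periodic-prefix
length and `w[I..J]` is the extension of that prefix, then `J = i + m - 1`. -/
private lemma ext_end_eq {w : ℕ → α} {n i j m I J : ℕ}
    (hi : 1 ≤ i) (hij : i ≤ j) (hjn : j ≤ n)
    (hnr : ¬ IsRep w n i j)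
    (hpp : PerPrefix w n i j m)
    (hmax : ∀ m', PerPrefix w n i j m' → m' ≤ m)
    (hext : IsExtension w n i (i + m - 1) I J) :
    J = i + m - 1 := by
  obtain ⟨hm1, hmc, hrep, h2m⟩ := hpp
  obtain ⟨hMR, hI, hJ, hq⟩ := hext
  have hjge : i + m - 1 ≤ j := by
    have := hmc
    simp only [flen] at this
    omega
  set jm := min J j with hjm
  have hjmge : i + m - 1 ≤ jm := le_min hJ hjge
  have hIJ : I ≤ J := le_trans (le_trans hI (by omega)) hJ
  have hperIJ : IsPeriod w I J (minPer w I J) := minPer_isPeriod w hIJ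
  have hperjm : IsPeriod w i jm (minPer w I J) :=
    isPeriod_mono hperIJ hI (min_le_left _ _)
  have hle : minPer w i jm ≤ minPer w I J := minPer_le hperjm
  have h2q : 2 * minPer w I J ≤ m := by
    have h1 := hrep.2
    simp only [flen] at h1
    rw [hq]
    omega
  have hppjm : PerPrefix w n i j (jm - i + 1) := by
    refine ⟨by omega, ?_, ?_, ?_⟩
    · simp only [flen]; omega
    · have heq : i + (jm - i + 1) - 1 = jm := by omega
      rw [heq]
      refine ⟨⟨hi, by omega, le_trans (min_le_right _ _) hjn⟩, ?_⟩
      simp only [flen]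
      omega
    · simp only [flen] at h2m ⊢
      omega
  have hjmle : jm - i + 1 ≤ m := hmax _ hppjm
  by_cases hc : J ≤ j
  · have : jm = J := min_eq_left hc
    omega
  · have hjmj : jm = j := min_eq_right (by omega)
    have hjeq : j = i + m - 1 := by omega
    exact absurd (hjeq ▸ hrep) hnr

/-- If a maximal repetition `w[I2..J2]` is left associated with a maximal repetition
`w[I1..J1]`, then `end(r') < end(r'') ≤ end(r') + 2k·|r'|`. -/
theorem leftAssociated_end_bounds (w : ℕ → α) (n k : ℕ) (hk : 2 ≤ k)
    (I1 J1 I2 J2 : ℕ) (h : LeftAssociated w n k I1 J1 I2 J2) :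
    J1 < J2 ∧ J2 ≤ J1 + 2 * k * flen I1 J1 := by
  obtain ⟨i1, j1, p, ⟨⟨hMG, hAG, hnr1, hnr2, -, -⟩, m, ⟨hpp1, hmax1⟩,
    ⟨hpp2, hmax2⟩, hE1, hE2, hlen⟩⟩ := h
  obtain ⟨⟨hi1, hij, hcp, hjn, -⟩, -, -⟩ := hMG
  simp only [flen] at hcp
  have hJ1 : J1 = i1 + m - 1 :=
    ext_end_eq hi1 hij (by omega) hnr1 hpp1 hmax1 hE1
  have hJ2 : J2 = i1 + p + m - 1 :=
    ext_end_eq (by omega) (by omega) (by omega) hnr2 hpp2 hmax2 hE2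
  have hm1 : 1 ≤ m := hpp1.1
  have h2m : flen i1 j1 ≤ 2 * m := hpp1.2.2.2
  have hpk : p ≤ k * flen i1 j1 := by
    have := hAG
    simp only [AlphaGapped] at this
    exact_mod_cast this
  have hI1 : I1 ≤ i1 := hE1.2.1
  have hmL : m ≤ flen I1 J1 := by
    simp only [flen]
    omega
  have hpb : p ≤ 2 * k * flen I1 J1 :=
    calc p ≤ k * flen i1 j1 := hpk
      _ ≤ k * (2 * m) := Nat.mul_le_mul_left _ h2m
      _ = 2 * k * m := by ring
      _ ≤ 2 * k * flen I1 J1 := Nat.mul_le_mul_left _ hmL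
  constructor
  · omega
  · omega

end Gapped
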